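/- Let α, β, γ ∈ (0,1) with γ < min{α/β, β/α}, and define f(α, β, γ) = (1 - α² - β² - γ² + 2αβγ)/(1 - γ²). Then f is strictly decreasing in α, strictly decreasing in β, and strictly increasing in γ (partial derivatives are negative, negative, and positive respectively). -/
import Mathlib


theorem stmt_1 (f : ℝ → ℝ → ℝ → ℝ)
    (hf : ∀ α β γ, f α β γ = (1 - α^2 - β^2 - γ^2 + 2*α*β*γ) / (1 - γ^2)) :
    (∀ α₁ α₂ β γ, α₁ ∈ Set.Ioo (0:ℝ) 1 → α₂ ∈ Set.Ioo (0:ℝ) 1 → β ∈ Set.Ioo (0:ℝ) 1 →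
      γ ∈ Set.Ioo (0:ℝ) 1 → γ < min (α₁/β) (β/α₁) → γ < min (α₂/β) (β/α₂) →
      α₁ < α₂ → f α₂ β γ < f α₁ β γ) ∧
    (∀ α β₁ β₂ γ, α ∈ Set.Ioo (0:ℝ) 1 → β₁ ∈ Set.Ioo (0:ℝ) 1 → β₂ ∈ Set.Ioo (0:ℝ) 1 →
      γ ∈ Set.Ioo (0:ℝ) 1 → γ < min (α/β₁) (β₁/α) → γ < min (α/β₂) (β₂/α) →
      β₁ < β₂ → f α β₂ γ < f α β₁ γ) ∧
    (∀ α β γ₁ γ₂, α ∈ Set.Ioo (0:ℝ) 1 → β ∈ Set.Ioo (0:ℝ) 1 → γ₁ ∈ Set.Ioo (0:ℝ) 1 →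
      γ₂ ∈ Set.Ioo (0:ℝ) 1 → γ₁ < min (α/β) (β/α) → γ₂ < min (α/β) (β/α) →
      γ₁ < γ₂ → f α β γ₁ < f α β γ₂) := by
  refine ⟨?_, ?_, ?_⟩
  · rintro α₁ α₂ β γ ⟨ha1, ha1'⟩ ⟨ha2, ha2'⟩ ⟨hb, hb'⟩ ⟨hg, hg'⟩ h1 h2 hlt
    rw [hf, hf]
    have hd : (0:ℝ) < 1 - γ^2 := by nlinarith
    rw [div_lt_div_iff₀ hd hd]
    have k1 : γ * β < α₁ := (lt_div_iff₀ hb).mp ((lt_min_iff.mp h1).1)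
    have k2 : γ * β < α₂ := (lt_div_iff₀ hb).mp ((lt_min_iff.mp h2).1)
    nlinarith [mul_pos (mul_pos (sub_pos.mpr hlt)
      (show (0:ℝ) < α₁ + α₂ - 2*β*γ by linarith)) hd]
  · rintro α β₁ β₂ γ ⟨ha, ha'⟩ ⟨hb1, hb1'⟩ ⟨hb2, hb2'⟩ ⟨hg, hg'⟩ h1 h2 hlt
    rw [hf, hf]
    have hd : (0:ℝ) < 1 - γ^2 := by nlinarith
    rw [div_lt_div_iff₀ hd hd]
    have k1 : γ * α < β₁ := (lt_div_iff₀ ha).mp ((lt_min_iff.mp h1).2)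
    have k2 : γ * α < β₂ := (lt_div_iff₀ ha).mp ((lt_min_iff.mp h2).2)
    nlinarith [mul_pos (mul_pos (sub_pos.mpr hlt)
      (show (0:ℝ) < β₁ + β₂ - 2*α*γ by linarith)) hd]
  · rintro α β γ₁ γ₂ ⟨ha, ha'⟩ ⟨hb, hb'⟩ ⟨hg1, hg1'⟩ ⟨hg2, hg2'⟩ h1 h2 hlt
    rw [hf, hf]
    have hd1 : (0:ℝ) < 1 - γ₁^2 := by nlinarith
    have hd2 : (0:ℝ) < 1 - γ₂^2 := by nlinarith
    rw [div_lt_div_iff₀ hd1 hd2]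
    have k1 : γ₁ * β < α := (lt_div_iff₀ hb).mp ((lt_min_iff.mp h1).1)
    have k2 : γ₁ * α < β := (lt_div_iff₀ ha).mp ((lt_min_iff.mp h1).2)
    have k3 : γ₂ * β < α := (lt_div_iff₀ hb).mp ((lt_min_iff.mp h2).1)
    have k4 : γ₂ * α < β := (lt_div_iff₀ ha).mp ((lt_min_iff.mp h2).2)
    have p1 : 0 < (α - β*γ₁) * (β - α*γ₂) :=
      mul_pos (by linarith) (by linarith)
    have p2 : 0 < (α - β*γ₂) * (β - α*γ₁) :=
      mul_pos (by linarith) (by linarith)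
    nlinarith [mul_pos (sub_pos.mpr hlt) (add_pos p1 p2)]
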